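/- arXiv:1105.3712 — 2 statements merged into one kernel-verified Lean document; each statement's English description precedes it below -/
import Mathlib

section
/- Let H be a finite simple graph on n vertices with chromatic number χ, and let k = ⌈n/χ⌉. Then every graph G with G →r H satisfies |V(G)| ≥ k·n − χ·k·(k−1)/2; consequently ρ(H) ≥ k(n − χ(k−1)/2). -/
/-!
Color `G` greedily, class `i` being a maximum independent set of the vertices not yet colored.
A rainbow induced copy of `H` meets each class `T` of a proper `χ`-coloring of `H` in an
independent set of `G` whose `t = |T|` colors are distinct, say `i₁ < ⋯ < iₜ`. Its vertices of
color `≥ iⱼ` were all uncolored at step `iⱼ`, so class `iⱼ` of `G` has at least `t - j + 1`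
vertices. Summing over the disjoint classes gives `|V(G)| ≥ ∑_T |T|(|T|+1)/2`, and
`t(t+1) ≥ 2kt - k(k-1)`, i.e. `(t-k)(t-k+1) ≥ 0`, holds for every integer `k`. The infimum
defining `rho H` is attained because `H[Kₙ]` arrows `H`, by Hall's theorem.
-/

/-- `ArrowsR G H` (written `G →r H`) means: every proper vertex coloring of `G`
contains a rainbow induced subgraph isomorphic to `H`, i.e. an induced copy of `H`
(a graph embedding) whose vertices receive pairwise distinct colors. -/
def ArrowsR {α β : Type} (G : SimpleGraph α) (H : SimpleGraph β) : Prop :=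
  ∀ c : α → ℕ, (∀ u v : α, G.Adj u v → c u ≠ c v) →
    ∃ f : H ↪g G, Function.Injective fun h => c (f h)

/-- `rho H` is the minimum number of vertices of a graph `G` with `G →r H`. -/
noncomputable def rho {β : Type} (H : SimpleGraph β) : ℕ :=
  sInf {m : ℕ | ∃ G : SimpleGraph (Fin m), ArrowsR G H}

open Finset

theorem Finset.card_mul_card_add_one_eq_two_mul_sum_card_filter_le {ι α : Type*} [LinearOrder α]
    {s : Finset ι} {f : ι → α} (hf : Set.InjOn f s) :
    #s * (#s + 1) = 2 * ∑ i ∈ s, #{j ∈ s | f i ≤ f j} := by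
  classical
  have hswap : ∑ i ∈ s, #{j ∈ s | f j ≤ f i} = ∑ i ∈ s, #{j ∈ s | f i ≤ f j} := by
    simp only [card_filter]
    exact sum_comm
  have hsplit : ∀ i ∈ s, #{j ∈ s | f i ≤ f j} + #{j ∈ s | f j ≤ f i} = #s + 1 := by
    intro i hi
    have hor : {j ∈ s | f i ≤ f j ∨ f j ≤ f i} = s :=
      filter_true_of_mem fun j _ => le_total _ _
    have hand : {j ∈ s | f i ≤ f j ∧ f j ≤ f i} = {i} := by
      ext j
      simp only [mem_filter, mem_singleton]
      refine ⟨fun ⟨hj, h₁, h₂⟩ => hf hj hi (le_antisymm h₂ h₁), ?_⟩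
      rintro rfl
      exact ⟨hi, le_rfl, le_rfl⟩
    rw [← card_union_add_card_inter, ← filter_or, ← filter_and, hor, hand, card_singleton]
  calc #s * (#s + 1) = ∑ i ∈ s, (#{j ∈ s | f i ≤ f j} + #{j ∈ s | f j ≤ f i}) := by
        rw [sum_congr rfl hsplit, sum_const, smul_eq_mul]
    _ = 2 * ∑ i ∈ s, #{j ∈ s | f i ≤ f j} := by rw [sum_add_distrib, hswap, two_mul]

theorem Finset.sum_card_fiber_le_card {ι κ μ : Type*} [DecidableEq μ] {s : Finset ι}
    (t : Finset κ) {f : κ → μ} {g : ι → μ} (hg : Set.InjOn g s) :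
    ∑ i ∈ s, #{j ∈ t | f j = g i} ≤ #t := by
  rw [← sum_image (f := fun b => #{j ∈ t | f j = b}) hg, sum_card_fiberwise_eq_card_filter]
  exact card_filter_le _ _

lemma Int.two_mul_mul_sub_mul_sub_one_le (k t : ℤ) : 2 * k * t - k * (k - 1) ≤ t * (t + 1) := by
  have : 0 ≤ (t - k) * (t - k + 1) := by
    rcases le_or_gt k t with h | h <;> nlinarith
  nlinarith

namespace SimpleGraph

variable {W : Type*} (G : SimpleGraph W)

lemma exists_isIndepSet_subset_forall_card_le (B : Finset W) :
    ∃ M ⊆ B, G.IsIndepSet M ∧ ∀ s ⊆ B, G.IsIndepSet s → #s ≤ #M := by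
  classical
  obtain ⟨M, hM, hmax⟩ :=
    exists_max_image (B.powerset.filter fun s : Finset W => G.IsIndepSet (s : Set W)) card
      ⟨∅, by simp⟩
  simp only [mem_filter, mem_powerset] at hM
  exact ⟨M, hM.1, hM.2, fun s hs hind => hmax s (by simp [hs, hind])⟩

/-- Satisfied by the coloring that repeatedly removes a maximum independent set of the
uncolored vertices of `B`. -/
def IsGreedyColoringOn (B : Finset W) (c : W → ℕ) : Prop :=
  (∀ u ∈ B, ∀ v ∈ B, G.Adj u v → c u ≠ c v) ∧
    ∀ (i : ℕ) (s : Finset W), s ⊆ B → G.IsIndepSet s → (∀ v ∈ s, i ≤ c v) →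
      #s ≤ #{v ∈ B | c v = i}

theorem exists_isGreedyColoringOn [DecidableEq W] (B : Finset W) :
    ∃ c, G.IsGreedyColoringOn B c := by
  induction B using Finset.strongInduction with
  | H B ih =>
  rcases B.eq_empty_or_nonempty with rfl | ⟨x, hx⟩
  · exact ⟨0, by simp [IsGreedyColoringOn]⟩
  obtain ⟨M, hMB, hMind, hMmax⟩ := G.exists_isIndepSet_subset_forall_card_le B
  have hM : M.Nonempty := card_pos.mp <| by
    simpa using hMmax {x} (by simpa) (by simp)
  obtain ⟨c, hproper, hmax⟩ := ih (B \ M) (sdiff_ssubset hMB hM)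
  refine ⟨fun v => if v ∈ M then 0 else c v + 1, ?_, ?_⟩
  · intro u hu v hv huv
    by_cases huM : u ∈ M <;> by_cases hvM : v ∈ M <;> simp only [huM, hvM, if_true, if_false]
    · exact fun _ => hMind huM hvM (G.ne_of_adj huv) huv
    · omega
    · omega
    · exact fun h =>
        hproper u (mem_sdiff.2 ⟨hu, huM⟩) v (mem_sdiff.2 ⟨hv, hvM⟩) huv (by omega)
  · rintro (_ | i) s hsB hs hsi
    · calc #s ≤ #M := hMmax s hsB hs
        _ = _ := by congr 1; ext v; simp only [mem_filter]; grind
    · have hsM : ∀ v ∈ s, v ∉ M := fun v hv hvM => by simpa [hvM] using hsi v hv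
      calc #s ≤ #{v ∈ B \ M | c v = i} :=
            hmax i s (fun v hv => mem_sdiff.2 ⟨hsB hv, hsM v hv⟩) hs
              (fun v hv => by simpa [hsM v hv] using hsi v hv)
        _ = _ := by congr 1; ext v; simp only [mem_filter, mem_sdiff]; grind

variable {G} in
theorem IsGreedyColoringOn.card_mul_card_add_one_le {B : Finset W} {c : W → ℕ}
    (hc : G.IsGreedyColoringOn B c) {s : Finset W} (hsB : s ⊆ B) (hs : G.IsIndepSet s)
    (hinj : Set.InjOn c s) :
    #s * (#s + 1) ≤ 2 * ∑ v ∈ s, #{u ∈ B | c u = c v} := by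
  rw [card_mul_card_add_one_eq_two_mul_sum_card_filter_le hinj]
  gcongr 2 * ∑ v ∈ s, ?_ with v hv
  exact hc.2 (c v) {u ∈ s | c v ≤ c u} ((filter_subset _ _).trans hsB)
    (hs.mono (coe_subset.2 (filter_subset _ _))) (by simp)

end SimpleGraph

section ArrowsR

variable {V W : Type} {G : SimpleGraph W} {H : SimpleGraph V}

theorem ArrowsR.of_iso {W' : Type} {G' : SimpleGraph W'} (e : G ≃g G') (h : ArrowsR G H) :
    ArrowsR G' H := by
  intro c hc
  obtain ⟨f, hf⟩ := h (c ∘ e) fun u v huv => hc _ _ (e.map_adj_iff.mpr huv)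
  exact ⟨e.toEmbedding.comp f, hf⟩

theorem ArrowsR.sum_card_mul_card_add_one_le [Fintype V] [Fintype W] (hGH : ArrowsR G H)
    {α : Type*} [Fintype α] [DecidableEq α] (σ : H.Coloring α) :
    ∑ q, #{v | σ v = q} * (#{v | σ v = q} + 1) ≤ 2 * Fintype.card W := by
  classical
  obtain ⟨c, hc⟩ := G.exists_isGreedyColoringOn univ
  obtain ⟨f, hf⟩ := hGH c fun u v => hc.1 u (mem_univ _) v (mem_univ _)
  have hclass : ∀ q, #{v | σ v = q} * (#{v | σ v = q} + 1) ≤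
      2 * ∑ v ∈ {v | σ v = q}, #{u | c u = c (f v)} := by
    intro q
    have hind : G.IsIndepSet (({v | σ v = q} : Finset V).map f.toEmbedding : Finset W) := by
      simp only [coe_map, coe_filter, mem_univ, true_and]
      rintro _ ⟨a, ha, rfl⟩ _ ⟨b, hb, rfl⟩ - hab
      exact σ.valid (f.map_adj_iff.mp hab) (ha.trans hb.symm)
    have hinj : Set.InjOn c (({v | σ v = q} : Finset V).map f.toEmbedding : Finset W) := by
      simp only [coe_map]
      rintro _ ⟨a, -, rfl⟩ _ ⟨b, -, rfl⟩ hab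
      rw [hf hab]
    simpa using hc.card_mul_card_add_one_le (subset_univ _) hind hinj
  calc ∑ q, #{v | σ v = q} * (#{v | σ v = q} + 1)
      ≤ ∑ q, 2 * ∑ v ∈ {v | σ v = q}, #{u | c u = c (f v)} :=
        sum_le_sum fun q _ => hclass q
    _ = 2 * ∑ v, #{u | c u = c (f v)} := by rw [← mul_sum, sum_fiberwise]
    _ ≤ 2 * Fintype.card W := by
      gcongr
      exact sum_card_fiber_le_card univ hf.injOn

theorem ArrowsR.two_mul_sub_le [Fintype V] [Fintype W] (hGH : ArrowsR G H) {χ : ℕ}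
    (hχ : H.Colorable χ) (k : ℤ) :
    2 * k * Fintype.card V - χ * k * (k - 1) ≤ 2 * Fintype.card W := by
  classical
  let σ := hχ.some
  have hcard : ∑ q, #{v | σ v = q} = Fintype.card V :=
    (card_eq_sum_card_fiberwise fun _ _ => mem_univ _).symm
  calc 2 * k * Fintype.card V - χ * k * (k - 1)
      = ∑ q : Fin χ, (2 * k * #{v | σ v = q} - k * (k - 1)) := by
        rw [sum_sub_distrib, ← mul_sum, ← hcard]
        simp [mul_assoc]
    _ ≤ ∑ q : Fin χ, (#{v | σ v = q} * (#{v | σ v = q} + 1) : ℤ) :=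
        sum_le_sum fun q _ => Int.two_mul_mul_sub_mul_sub_one_le _ _
    _ ≤ 2 * Fintype.card W := by exact_mod_cast hGH.sum_card_mul_card_add_one_le σ

end ArrowsR

/-- The lexicographic product `H[Kₙ]`. -/
def SimpleGraph.cliqueBlowup {V : Type*} (H : SimpleGraph V) (n : ℕ) :
    SimpleGraph (V × Fin n) where
  Adj p q := H.Adj p.1 q.1 ∨ p.1 = q.1 ∧ p.2 ≠ q.2
  symm := ⟨fun _ _ h => h.imp (·.symm) fun ⟨h₁, h₂⟩ => ⟨h₁.symm, h₂.symm⟩⟩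
  loopless := ⟨fun p => by rintro (h | ⟨-, h⟩) <;> simp_all⟩

@[simp]
lemma SimpleGraph.cliqueBlowup_adj {V : Type*} (H : SimpleGraph V) (n : ℕ) {p q : V × Fin n} :
    (H.cliqueBlowup n).Adj p q ↔ H.Adj p.1 q.1 ∨ p.1 = q.1 ∧ p.2 ≠ q.2 :=
  Iff.rfl

theorem arrowsR_cliqueBlowup {V : Type} [Fintype V] (H : SimpleGraph V) {n : ℕ}
    (hn : Fintype.card V ≤ n) : ArrowsR (H.cliqueBlowup n) H := by
  classical
  intro c hc
  let t : V → Finset ℕ := fun v => univ.image fun i => c (v, i)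
  have ht : ∀ v, #(t v) = n := fun v => by
    refine (card_image_of_injective _ fun i j hij => ?_).trans (card_fin n)
    by_contra hne
    exact hc _ _ (by simpa using hne) hij
  have hall : ∀ s : Finset V, #s ≤ #(s.biUnion t) := by
    intro s
    rcases s.eq_empty_or_nonempty with rfl | ⟨v, hv⟩
    · simp
    · calc #s ≤ Fintype.card V := card_le_univ s
        _ ≤ #(t v) := ht v ▸ hn
        _ ≤ #(s.biUnion t) := card_le_card (subset_biUnion_of_mem t hv)
  obtain ⟨g, hg, hgt⟩ := (all_card_le_biUnion_card_iff_exists_injective t).mp hall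
  choose i hi using fun v => mem_image.mp (hgt v)
  refine ⟨⟨⟨fun v => (v, i v), fun u v h => congrArg Prod.fst h⟩, ?_⟩,
    fun u v h => hg ?_⟩
  · intro u v
    change H.Adj u v ∨ u = v ∧ i u ≠ i v ↔ H.Adj u v
    exact ⟨fun h => h.resolve_right fun ⟨huv, hne⟩ => hne (huv ▸ rfl), Or.inl⟩
  · exact (hi u).2.symm.trans (h.trans (hi v).2)

theorem exists_arrowsR_fin_rho {V : Type} [Fintype V] (H : SimpleGraph V) :
    ∃ G : SimpleGraph (Fin (rho H)), ArrowsR G H :=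
  Nat.sInf_mem (s := {m | ∃ G : SimpleGraph (Fin m), ArrowsR G H})
    ⟨_, _, (arrowsR_cliqueBlowup H le_rfl).of_iso ((H.cliqueBlowup _).overFinIso rfl)⟩

theorem stmt1_general {V : Type} [Fintype V] (H : SimpleGraph V) (n χ : ℕ) (k : ℤ)
    (hn : n = Fintype.card V) (hχ : H.chromaticNumber = χ) :
    (∀ (m : ℕ) (G : SimpleGraph (Fin m)), ArrowsR G H →
      (k : ℚ) * n - (χ : ℚ) * k * ((k : ℚ) - 1) / 2 ≤ (m : ℚ)) ∧
    (k : ℚ) * ((n : ℚ) - (χ : ℚ) * ((k : ℚ) - 1) / 2) ≤ (rho H : ℚ) := by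
  have hcol : H.Colorable χ := SimpleGraph.chromaticNumber_le_iff_colorable.mp hχ.le
  have hbound : ∀ (m : ℕ) (G : SimpleGraph (Fin m)), ArrowsR G H →
      (k : ℚ) * n - χ * k * (k - 1) / 2 ≤ m := by
    intro m G hGH
    have hZ := hGH.two_mul_sub_le hcol k
    rw [Fintype.card_fin, ← hn] at hZ
    have hQ : (2 * k * n - χ * k * (k - 1) : ℚ) ≤ 2 * m := by exact_mod_cast hZ
    linarith
  obtain ⟨G, hGH⟩ := exists_arrowsR_fin_rho H
  exact ⟨hbound, by linarith [hbound _ G hGH]⟩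

/-- Lower bound: with `n = |V(H)|`, `χ = χ(H)` and `k = ⌈n/χ⌉`, every graph `G`
with `G →r H` has at least `k·n − χ·k·(k−1)/2` vertices, hence
`rho H ≥ k(n − χ(k−1)/2)`. -/
theorem stmt1 {V : Type} [Fintype V] (H : SimpleGraph V) (n χ : ℕ) (k : ℤ)
    (hn : n = Fintype.card V) (hχ : H.chromaticNumber = χ)
    (hk : k = ⌈(n : ℚ) / (χ : ℚ)⌉) :
    (∀ (m : ℕ) (G : SimpleGraph (Fin m)), ArrowsR G H →
      (k : ℚ) * n - (χ : ℚ) * k * ((k : ℚ) - 1) / 2 ≤ (m : ℚ)) ∧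
    (k : ℚ) * ((n : ℚ) - (χ : ℚ) * ((k : ℚ) - 1) / 2) ≤ (rho H : ℚ) :=
  stmt1_general H n χ k hn hχ
end

section
/- For any finite simple graphs H_1 and H_2, the join H_1 + H_2 (disjoint union of H_1 and H_2 together with all edges between V(H_1) and V(H_2)) satisfies ρ_R(H_1 + H_2) = ρ_R(H_1) + ρ_R(H_2). -/
/-- `G` together with `f : α → β` is a replication graph of `H`: every fiber of `f`
is a nonempty clique, and vertices in distinct fibers are adjacent in `G` iff their
images are adjacent in `H`. -/
def IsReplication {α β : Type} (G : SimpleGraph α) (H : SimpleGraph β) (f : α → β) : Prop :=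
  Function.Surjective f ∧
    (∀ u v : α, u ≠ v → f u = f v → G.Adj u v) ∧
    (∀ u v : α, f u ≠ f v → (G.Adj u v ↔ H.Adj (f u) (f v)))

/-- `G →R H` (for a replication graph `G` of `H` via `f`): every proper coloring of `G`
admits a section `s` of `f` whose image is rainbow (pairwise distinct colors), i.e. a
rainbow induced copy of `H` meeting each fiber exactly once. -/
def ArrowsRR {α β : Type} (G : SimpleGraph α) (H : SimpleGraph β) (f : α → β) : Prop :=
  ∀ c : α → ℕ, (∀ u v : α, G.Adj u v → c u ≠ c v) →
    ∃ s : β → α, (∀ h, f (s h) = h) ∧ Function.Injective fun h => c (s h)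

/-- `rhoR H` is the minimum number of vertices of a replication graph `G` of `H`
with `G →R H`. -/
noncomputable def rhoR {β : Type} (H : SimpleGraph β) : ℕ :=
  sInf {m : ℕ | ∃ (G : SimpleGraph (Fin m)) (f : Fin m → β),
    IsReplication G H f ∧ ArrowsRR G H f}

/-- The join of `H₁` and `H₂`: disjoint union plus all edges between the two parts. -/
def graphJoin {V₁ V₂ : Type} (H₁ : SimpleGraph V₁) (H₂ : SimpleGraph V₂) :
    SimpleGraph (V₁ ⊕ V₂) where
  Adj x y := match x, y with
    | Sum.inl a, Sum.inl b => H₁.Adj a b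
    | Sum.inr a, Sum.inr b => H₂.Adj a b
    | Sum.inl _, Sum.inr _ => True
    | Sum.inr _, Sum.inl _ => True
  symm := by
    constructor
    rintro (a | a) (b | b) h
    · exact h.symm
    · trivial
    · trivial
    · exact h.symm
  loopless := by
    constructor
    rintro (a | a) h
    · exact H₁.irrefl h
    · exact H₂.irrefl h

/-!
Gluing minimum replication graphs of `H₁` and `H₂` by a join gives a replication graph of
`H₁ + H₂` that arrows it: the two sides of the join carry disjoint colors, so rainbow
sections of the sides combine. Conversely, a replication graph `G` of `H₁ + H₂` splits into
the preimages of `V(H₁)` and `V(H₂)`, each a replication graph of its side that still arrows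
it, because a proper coloring of the part extends (with fresh colors) to `G`, and a rainbow
section of `G` restricts. That `ρ_R` is attained at all comes from blowing every vertex of
`H` up to a `(|V(H)| + 1)`-clique and choosing distinct colors by Hall's theorem.
-/

open Function Set

section Transport

variable {α α' β : Type} {G : SimpleGraph α} {H : SimpleGraph β} {f : α → β}

lemma IsReplication.comap_equiv (hr : IsReplication G H f) (e : α' ≃ α) :
    IsReplication (G.comap e) H (f ∘ e) :=
  ⟨hr.1.comp e.surjective, fun u v huv hf => hr.2.1 (e u) (e v) (e.injective.ne huv) hf,
    fun u v hf => hr.2.2 (e u) (e v) hf⟩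

lemma ArrowsRR.comap_equiv (ha : ArrowsRR G H f) (e : α' ≃ α) :
    ArrowsRR (G.comap e) H (f ∘ e) := by
  intro c hc
  obtain ⟨s, hs, hinj⟩ := ha (c ∘ e.symm) fun u v huv => hc _ _ (by simpa using huv)
  exact ⟨e.symm ∘ s, fun h => by simpa using hs h, by simpa [Function.comp_def] using hinj⟩

lemma rhoR_le_card [Finite α] (hr : IsReplication G H f) (ha : ArrowsRR G H f) :
    rhoR H ≤ Nat.card α :=
  Nat.sInf_le ⟨_, _, hr.comap_equiv (Finite.equivFin α).symm,
    ha.comap_equiv (Finite.equivFin α).symm⟩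

end Transport

lemma exists_injective_mem_of_card_le {ι γ : Type} [Fintype ι] [DecidableEq γ]
    (t : ι → Finset γ) (ht : ∀ i, Fintype.card ι ≤ (t i).card) :
    ∃ g : ι → γ, Injective g ∧ ∀ i, g i ∈ t i := by
  refine (Finset.all_card_le_biUnion_card_iff_exists_injective t).mp fun s => ?_
  obtain rfl | ⟨i, hi⟩ := s.eq_empty_or_nonempty
  · simp
  · exact (s.card_le_univ.trans (ht i)).trans (Finset.card_le_card (s.subset_biUnion_of_mem t hi))

/-- The lexicographic product `H[Kₙ]`: every vertex of `H` is replaced by an `n`-clique. -/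
def blowup {β : Type} (H : SimpleGraph β) (n : ℕ) : SimpleGraph (β × Fin n) where
  Adj a b := a ≠ b ∧ (a.1 = b.1 ∨ H.Adj a.1 b.1)
  symm := ⟨fun _ _ h => ⟨h.1.symm, h.2.imp Eq.symm SimpleGraph.Adj.symm⟩⟩
  loopless := ⟨fun _ h => h.1 rfl⟩

section Blowup

variable {β : Type} (H : SimpleGraph β) {n : ℕ}

@[simp] lemma blowup_adj {a b : β × Fin n} :
    (blowup H n).Adj a b ↔ a ≠ b ∧ (a.1 = b.1 ∨ H.Adj a.1 b.1) := Iff.rfl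

lemma isReplication_blowup (hn : 0 < n) : IsReplication (blowup H n) H Prod.fst :=
  ⟨fun b => ⟨(b, ⟨0, hn⟩), rfl⟩, fun _ _ huv hf => (blowup_adj H).2 ⟨huv, Or.inl hf⟩,
    fun _ _ hf => ⟨fun h => h.2.resolve_left hf,
      fun h => (blowup_adj H).2 ⟨fun e => hf (congrArg _ e), Or.inr h⟩⟩⟩

/-- Hall's theorem: every fiber shows `n ≥ |V(H)|` colors, so distinct colors can be
picked fiber by fiber. -/
lemma arrowsRR_blowup [Fintype β] (hn : Fintype.card β ≤ n) :
    ArrowsRR (blowup H n) H Prod.fst := by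
  classical
  intro c hc
  have hfiber : ∀ b, Injective fun i : Fin n => c (b, i) := fun b i j hij => by
    by_contra hne
    exact hc (b, i) (b, j)
      ((blowup_adj H).2 ⟨fun e => hne (congrArg Prod.snd e), Or.inl rfl⟩) hij
  obtain ⟨g, hg, hgmem⟩ := exists_injective_mem_of_card_le
    (fun b => Finset.univ.image fun i : Fin n => c (b, i))
    fun b => by
      rwa [Finset.card_image_of_injective _ (hfiber b), Finset.card_univ, Fintype.card_fin]
  choose idx hidx using fun b => by simpa using hgmem b
  exact ⟨fun b => (b, idx b), fun _ => rfl, by simpa [hidx] using hg⟩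

end Blowup

lemma exists_replication_card_rhoR {β : Type} [Fintype β] (H : SimpleGraph β) :
    ∃ (G : SimpleGraph (Fin (rhoR H))) (f : Fin (rhoR H) → β),
      IsReplication G H f ∧ ArrowsRR G H f := by
  suffices h : ∃ m, ∃ (G : SimpleGraph (Fin m)) (f : Fin m → β),
      IsReplication G H f ∧ ArrowsRR G H f from Nat.sInf_mem h
  exact ⟨_, _, _,
    (isReplication_blowup H (Nat.succ_pos _)).comap_equiv (Fintype.equivFin _).symm,
    (arrowsRR_blowup H (Nat.le_succ _)).comap_equiv (Fintype.equivFin _).symm⟩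

section Join

variable {α₁ α₂ V₁ V₂ : Type} {G₁ : SimpleGraph α₁} {G₂ : SimpleGraph α₂}
  {H₁ : SimpleGraph V₁} {H₂ : SimpleGraph V₂} {f₁ : α₁ → V₁} {f₂ : α₂ → V₂}

lemma IsReplication.graphJoin (hr₁ : IsReplication G₁ H₁ f₁)
    (hr₂ : IsReplication G₂ H₂ f₂) :
    IsReplication (graphJoin G₁ G₂) (graphJoin H₁ H₂) (Sum.map f₁ f₂) := by
  refine ⟨Sum.map_surjective.2 ⟨hr₁.1, hr₂.1⟩, ?_, ?_⟩
  · rintro (u | u) (v | v) huv hf <;> simp only [Sum.map_inl, Sum.map_inr, reduceCtorEq,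
      Sum.inl.injEq, Sum.inr.injEq] at hf
    · exact hr₁.2.1 u v (fun e => huv (congrArg _ e)) hf
    · exact hr₂.2.1 u v (fun e => huv (congrArg _ e)) hf
  · rintro (u | u) (v | v) hf
    · exact hr₁.2.2 u v fun e => hf (by rw [Sum.map_inl, Sum.map_inl, e])
    · exact Iff.rfl
    · exact Iff.rfl
    · exact hr₂.2.2 u v fun e => hf (by rw [Sum.map_inr, Sum.map_inr, e])

lemma ArrowsRR.graphJoin (ha₁ : ArrowsRR G₁ H₁ f₁) (ha₂ : ArrowsRR G₂ H₂ f₂) :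
    ArrowsRR (graphJoin G₁ G₂) (graphJoin H₁ H₂) (Sum.map f₁ f₂) := by
  intro c hc
  obtain ⟨s₁, hs₁, hinj₁⟩ := ha₁ (c ∘ Sum.inl) fun u v h => hc (.inl u) (.inl v) h
  obtain ⟨s₂, hs₂, hinj₂⟩ := ha₂ (c ∘ Sum.inr) fun u v h => hc (.inr u) (.inr v) h
  refine ⟨Sum.map s₁ s₂, by rintro (h | h) <;> simp [hs₁, hs₂], ?_⟩
  rintro (a | a) (b | b) hab
  · exact congrArg _ (hinj₁ hab)
  · exact absurd hab (hc _ _ trivial)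
  · exact absurd hab (hc _ _ trivial)
  · exact congrArg _ (hinj₂ hab)

end Join

def graphJoinInl {V₁ V₂ : Type} (H₁ : SimpleGraph V₁) (H₂ : SimpleGraph V₂) :
    H₁ ↪g graphJoin H₁ H₂ :=
  ⟨Embedding.inl, Iff.rfl⟩

def graphJoinInr {V₁ V₂ : Type} (H₁ : SimpleGraph V₁) (H₂ : SimpleGraph V₂) :
    H₂ ↪g graphJoin H₁ H₂ :=
  ⟨Embedding.inr, Iff.rfl⟩

/-- Doubling the colors of `S` leaves the odd colors free for the other vertices. -/
lemma exists_proper_coloring_extension {α : Type} [Countable α] {G : SimpleGraph α}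
    {S : Set α} (c : S → ℕ) (hc : ∀ u v, (G.induce S).Adj u v → c u ≠ c v) :
    ∃ c' : α → ℕ, (∀ u v, G.Adj u v → c' u ≠ c' v) ∧ ∀ x : S, c' x = 2 * c x := by
  classical
  obtain ⟨e, he⟩ := exists_injective_nat α
  refine ⟨fun x => if h : x ∈ S then 2 * c ⟨x, h⟩ else 2 * e x + 1, fun u v huv => ?_,
    fun x => by simp⟩
  have hne : e u ≠ e v := he.ne (G.ne_of_adj huv)
  by_cases hu : u ∈ S <;> by_cases hv : v ∈ S <;> simp only [hu, hv, dite_true, dite_false]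
  · have := hc ⟨u, hu⟩ ⟨v, hv⟩ (by simpa using huv)
    omega
  all_goals omega

noncomputable def rangeLift {α β W : Type} (g : W → β) (hg : Injective g) (f : α → β) :
    f ⁻¹' range g → W :=
  (Equiv.ofInjective g hg).symm ∘ (range g).restrictPreimage f

lemma apply_rangeLift {α β W : Type} {g : W → β} (hg : Injective g) {f : α → β}
    (x : f ⁻¹' range g) : g (rangeLift g hg f x) = f x :=
  Equiv.apply_ofInjective_symm hg _

section Restrict

variable {α β W : Type} {G : SimpleGraph α} {H : SimpleGraph β} {H' : SimpleGraph W}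
  {f : α → β} (g : H' ↪g H)

lemma IsReplication.induce_preimage (hr : IsReplication G H f) :
    IsReplication (G.induce (f ⁻¹' range g)) H' (rangeLift g g.injective f) := by
  have hlift := apply_rangeLift g.injective (f := f)
  refine ⟨fun w => ?_, fun u v huv hf => ?_, fun u v hf => ?_⟩
  · obtain ⟨x, hx⟩ := hr.1 (g w)
    exact ⟨⟨x, w, hx.symm⟩, g.injective (by rw [hlift, hx])⟩
  · exact hr.2.1 u v (Subtype.coe_injective.ne huv) (by rw [← hlift, ← hlift, hf])
  · rw [SimpleGraph.induce_adj, hr.2.2 u v (by rwa [← hlift, ← hlift, g.injective.ne_iff]),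
      ← hlift, ← hlift, g.map_adj_iff]

lemma ArrowsRR.induce_preimage [Countable α] (ha : ArrowsRR G H f) :
    ArrowsRR (G.induce (f ⁻¹' range g)) H' (rangeLift g g.injective f) := by
  intro c hc
  obtain ⟨c', hc', hext⟩ := exists_proper_coloring_extension c hc
  obtain ⟨s, hs, hinj⟩ := ha c' hc'
  let s' : W → f ⁻¹' range g := fun w => ⟨s (g w), w, (hs (g w)).symm⟩
  refine ⟨s', fun w => g.injective (by rw [apply_rangeLift g.injective, hs]), fun a b hab => ?_⟩
  have hab' : c' (s' a) = c' (s' b) := by rw [hext, hext]; exact congrArg _ hab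
  exact g.injective (hinj hab')

lemma rhoR_le_ncard_preimage [Finite α] (hr : IsReplication G H f) (ha : ArrowsRR G H f) :
    rhoR H' ≤ (f ⁻¹' range g).ncard :=
  Nat.card_coe_set_eq (f ⁻¹' range g) ▸
    rhoR_le_card (hr.induce_preimage g) (ha.induce_preimage g)

end Restrict

/-- `ρ_R(H₁ + H₂) = ρ_R(H₁) + ρ_R(H₂)` for the join of two graphs. -/
theorem stmt16 {V₁ V₂ : Type} [Fintype V₁] [Fintype V₂]
    (H₁ : SimpleGraph V₁) (H₂ : SimpleGraph V₂) :
    rhoR (graphJoin H₁ H₂) = rhoR H₁ + rhoR H₂ := by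
  obtain ⟨G₁, f₁, hr₁, ha₁⟩ := exists_replication_card_rhoR H₁
  obtain ⟨G₂, f₂, hr₂, ha₂⟩ := exists_replication_card_rhoR H₂
  obtain ⟨G, f, hr, ha⟩ := exists_replication_card_rhoR (graphJoin H₁ H₂)
  apply le_antisymm
  · simpa using rhoR_le_card (hr₁.graphJoin hr₂) (ha₁.graphJoin ha₂)
  · calc rhoR H₁ + rhoR H₂
        ≤ (f ⁻¹' range Sum.inl).ncard + (f ⁻¹' range Sum.inr).ncard :=
          add_le_add (rhoR_le_ncard_preimage (graphJoinInl H₁ H₂) hr ha)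
            (rhoR_le_ncard_preimage (graphJoinInr H₁ H₂) hr ha)
      _ = rhoR (graphJoin H₁ H₂) := by
          rw [← compl_range_inl, preimage_compl, ncard_add_ncard_compl, Nat.card_fin]
end
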